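/- Let $I$ be an index set partitioned as $I^{re} \sqcup I^{im}$, and let $w = v_l r_{j_l} \cdots v_1 r_{j_1} v_0$ be a word with $j_1, \ldots, j_l \in I^{im}$ and $v_0, \ldots, v_l$ words in $\{r_j\}_{j \in I^{re}}$, acting on $\mathfrak{h}^*$ via $r_j(\mu) = \mu - \alpha_j^\vee(\mu)\alpha_j$. Suppose $\lambda$ is dominant and the expression satisfies: $\alpha_{j_s}^\vee(v_{s-1}r_{j_{s-1}}\cdots v_1 r_{j_1}v_0(\lambda)) = 1$ for all $s$, and every prefix preserves positivity in the sense that $\alpha_{j_s}^\vee$ paired with each intermediate weight is positive. If $j_s = j_t =: j$ for some $s > t$, then $a_{jj} = \alpha_j^\vee(\alpha_j) = 0$. -/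

import Mathlib

/-!
The coroot `α_j^∨` is anti-dominant: it pairs non-positively with every simple root, since
`a_{jk} ≤ 0` for `k ≠ j` and `a_{jj} ≤ 0` for imaginary `j`. A letter `r_k` applied with
non-negative pairing subtracts a non-negative multiple of `α_k`, so `α_j^∨` can only grow along
the word. If `j` is applied at positions `t < s`, both times with pairing `1`, then just after
position `t` the pairing is `1 - a_{jj}`, hence `1 - a_{jj} ≤ 1`, i.e. `a_{jj} ≥ 0`.
-/

lemma List.foldl_take_add_one {β γ : Type*} (f : β → γ → β) (b : β) {l : List γ} {n : ℕ}
    (h : n < l.length) :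
    (l.take (n + 1)).foldl f b = f ((l.take n).foldl f b) (l.get ⟨n, h⟩) := by
  rw [List.take_add_one, List.foldl_append, List.getElem?_eq_getElem h]
  rfl

lemma monotoneOn_Iic_of_le_succ {β : Type*} [Preorder β] {f : ℕ → β} {N : ℕ}
    (hf : ∀ n < N, f n ≤ f (n + 1)) : MonotoneOn f (Set.Iic N) :=
  monotoneOn_of_le_succ Set.ordConnected_Iic fun n _ _ hn ↦ by
    rw [Order.succ_eq_add_one] at hn ⊢
    exact hf n (Nat.lt_of_succ_le hn)

lemma LinearMap.le_apply_sub_smul {R V : Type*} [CommRing R] [PartialOrder R] [IsOrderedRing R]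
    [AddCommGroup V] [Module R V] (φ : V →ₗ[R] R) (μ : V) {c : R} {v : V} (hc : 0 ≤ c)
    (hv : φ v ≤ 0) : φ μ ≤ φ (μ - c • v) := by
  rw [map_sub, map_smul, smul_eq_mul, le_sub_self_iff]
  exact mul_nonpos_of_nonneg_of_nonpos hc hv

theorem stmt_16_general (V : Type*) [AddCommGroup V] [Module ℝ V] (I : Type*)
    (Ire : Set I) (α : I → V) (coroot : I → (V →ₗ[ℝ] ℝ))
    (hBC : ∀ j k, j ≠ k → coroot j (α k) ≤ 0)
    (himdiag : ∀ j, j ∉ Ire → coroot j (α j) ≤ 0)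
    (l : List I) (lam : V)
    (mu : ℕ → V)
    (hmu : ∀ n, mu n = (l.take n).foldl (fun μ j => μ - coroot j μ • α j) lam)
    (hpos : ∀ (n : ℕ) (h : n < l.length), 0 ≤ coroot (l.get ⟨n, h⟩) (mu n))
    (him1 : ∀ (n : ℕ) (h : n < l.length), l.get ⟨n, h⟩ ∉ Ire →
      coroot (l.get ⟨n, h⟩) (mu n) = 1) :
    ∀ (s t : ℕ) (hs : s < l.length) (ht : t < l.length), t < s →
      l.get ⟨s, hs⟩ = l.get ⟨t, ht⟩ → l.get ⟨s, hs⟩ ∉ Ire →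
      coroot (l.get ⟨s, hs⟩) (α (l.get ⟨s, hs⟩)) = 0 := by
  intro s t hs ht hts heq him
  set j := l.get ⟨s, hs⟩
  have hstep : ∀ n (h : n < l.length),
      mu (n + 1) = mu n - coroot (l.get ⟨n, h⟩) (mu n) • α (l.get ⟨n, h⟩) := fun n h ↦ by
    rw [hmu, hmu, List.foldl_take_add_one _ _ h]
  have hanti : ∀ k, coroot j (α k) ≤ 0 := fun k ↦
    (eq_or_ne j k).elim (fun h ↦ h ▸ himdiag j him) (hBC j k)
  have hmono : MonotoneOn (fun n ↦ coroot j (mu n)) (Set.Iic l.length) :=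
    monotoneOn_Iic_of_le_succ fun n h ↦ by
      rw [hstep n h]
      exact (coroot j).le_apply_sub_smul _ (hpos n h) (hanti _)
  have hat_t : coroot j (mu t) = 1 := heq ▸ him1 t ht (heq ▸ him)
  have hafter_t : coroot j (mu (t + 1)) = 1 - coroot j (α j) := by
    rw [hstep t ht, ← heq, map_sub, map_smul, hat_t, one_smul]
  have hle : coroot j (mu (t + 1)) ≤ coroot j (mu s) :=
    hmono (Set.mem_Iic.2 ht) (Set.mem_Iic.2 hs.le) hts
  rw [hafter_t, him1 s hs him] at hle
  linarith [himdiag j him]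

/-- Let `w` be a word in the generators `r_j` (given as a list of
indices, applied left-to-right to a dominant weight `λ`) in the Borcherds–Cartan
setting: off-diagonal pairings are `≤ 0`, imaginary diagonal entries are `≤ 0`.
Suppose each letter is applied with nonnegative pairing (positivity of the
prefixes), and each imaginary letter is applied with pairing exactly `1`. If an
imaginary index `j` is repeated in the word, then `a_{jj} = α_j^∨(α_j) = 0`. -/
theorem stmt_16 (V : Type*) [AddCommGroup V] [Module ℝ V] (I : Type*)
    (Ire : Set I) (α : I → V) (coroot : I → (V →ₗ[ℝ] ℝ))
    (hBC : ∀ j k, j ≠ k → coroot j (α k) ≤ 0)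
    (himdiag : ∀ j, j ∉ Ire → coroot j (α j) ≤ 0)
    (l : List I) (lam : V) (hdom : ∀ j, 0 ≤ coroot j lam)
    (mu : ℕ → V)
    (hmu : ∀ n, mu n = (l.take n).foldl (fun μ j => μ - coroot j μ • α j) lam)
    (hpos : ∀ (n : ℕ) (h : n < l.length), 0 ≤ coroot (l.get ⟨n, h⟩) (mu n))
    (him1 : ∀ (n : ℕ) (h : n < l.length), l.get ⟨n, h⟩ ∉ Ire →
      coroot (l.get ⟨n, h⟩) (mu n) = 1) :
    ∀ (s t : ℕ) (hs : s < l.length) (ht : t < l.length), t < s →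
      l.get ⟨s, hs⟩ = l.get ⟨t, ht⟩ → l.get ⟨s, hs⟩ ∉ Ire →
      coroot (l.get ⟨s, hs⟩) (α (l.get ⟨s, hs⟩)) = 0 :=
  stmt_16_general V I Ire α coroot hBC himdiag l lam mu hmu hpos him1
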